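/- arXiv:1002.2048 — 2 statements merged into one kernel-verified Lean document; each statement's English description precedes it below -/
import Mathlib

section
/- Let I be a negative definite symmetric integer matrix indexed by a finite set V. Then for each v in V there exists a unique vector E_v^* with rational entries such that I · E_v^* = -e_v (the negative of the v-th standard basis vector), and all entries of E_v^* are nonnegative... moreover if the graph with vertex set V and edges given by positive off-diagonal entries of I is connected, all entries of E_v^* are strictly positive. -/
/-!
Write `B = -I`, a positive definite matrix with nonpositive off-diagonal entries, so that
`E_v^*` is the solution of `B x = e_v`; it exists and is unique since `B` is invertible.
If `B x ≥ 0`, split `x = x⁺ - x⁻`: the supports of `x⁺` and `x⁻` are disjoint, so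
`x⁻ ⬝ B x⁺ ≤ 0`, whence `x⁻ ⬝ B x⁻ = x⁻ ⬝ B x⁺ - x⁻ ⬝ B x ≤ 0` and positive definiteness forces
`x⁻ = 0`. For positivity, if `x a = 0` then the row `(B x) a ≥ 0` is a sum of nonpositive terms,
so `x` vanishes at every neighbour of `a`; by connectedness a single zero makes `x = 0`.
-/

open Matrix

namespace Matrix

section ZMatrix

variable {n R : Type*} [Fintype n] [CommRing R] [LinearOrder R] [IsStrictOrderedRing R]
  {B : Matrix n n R}

theorem negPart_dotProduct_mulVec_posPart_nonpos (hB : ∀ i j, i ≠ j → B i j ≤ 0)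
    (x : n → R) : x⁻ ⬝ᵥ (B *ᵥ x⁺) ≤ 0 := by
  simp only [dotProduct, mulVec, Finset.mul_sum]
  refine Finset.sum_nonpos fun i _ => Finset.sum_nonpos fun j _ => ?_
  obtain rfl | hij := eq_or_ne i j
  · have : x⁻ i * x⁺ i = 0 := by
      rcases le_total 0 (x i) with h | h <;> simp [h]
    linear_combination B i i * this
  · exact mul_nonpos_of_nonneg_of_nonpos (negPart_nonneg _)
      (mul_nonpos_of_nonpos_of_nonneg (hB i j hij) (posPart_nonneg _))

theorem PosDef.nonneg_of_mulVec_nonneg [StarRing R] [TrivialStar R] (hB : B.PosDef)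
    (hoff : ∀ i j, i ≠ j → B i j ≤ 0) {x : n → R} (hBx : 0 ≤ B *ᵥ x) : 0 ≤ x := by
  rw [← negPart_eq_zero]
  by_contra hne
  have hpos : 0 < x⁻ ⬝ᵥ (B *ᵥ x⁻) := by
    simpa using hB.dotProduct_mulVec_pos hne
  have hsplit : x⁻ ⬝ᵥ (B *ᵥ x) = x⁻ ⬝ᵥ (B *ᵥ x⁺) - x⁻ ⬝ᵥ (B *ᵥ x⁻) := by
    rw [← dotProduct_sub, ← mulVec_sub, posPart_sub_negPart]
  have hnonneg : 0 ≤ x⁻ ⬝ᵥ (B *ᵥ x) := dotProduct_nonneg_of_nonneg (negPart_nonneg x) hBx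
  linarith [negPart_dotProduct_mulVec_posPart_nonpos hoff x]

theorem apply_eq_zero_of_apply_eq_zero_of_lt_zero (hoff : ∀ i j, i ≠ j → B i j ≤ 0)
    {x : n → R} (hx : 0 ≤ x) {a c : n} (hBx : 0 ≤ (B *ᵥ x) a) (ha : x a = 0)
    (hac : B a c < 0) : x c = 0 := by
  have hterm : ∀ j ∈ Finset.univ, B a j * x j ≤ 0 := fun j _ => by
    obtain rfl | hj := eq_or_ne a j
    · simp [ha]
    · exact mul_nonpos_of_nonpos_of_nonneg (hoff a j hj) (hx j)
  have hsum : ∑ j, B a j * x j = 0 := le_antisymm (Finset.sum_nonpos hterm) hBx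
  have := (Finset.sum_eq_zero_iff_of_nonpos hterm).1 hsum c (Finset.mem_univ c)
  exact (mul_eq_zero.1 this).resolve_left hac.ne

theorem apply_eq_zero_of_reflTransGen (hoff : ∀ i j, i ≠ j → B i j ≤ 0)
    {x : n → R} (hx : 0 ≤ x) (hBx : 0 ≤ B *ᵥ x) {a b : n}
    (hab : Relation.ReflTransGen (fun i j => B i j < 0) a b) (ha : x a = 0) : x b = 0 := by
  induction hab with
  | refl => exact ha
  | tail _ hcd ih => exact apply_eq_zero_of_apply_eq_zero_of_lt_zero hoff hx (hBx _) ih hcd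

theorem pos_of_reflTransGen (hoff : ∀ i j, i ≠ j → B i j ≤ 0)
    (hconn : ∀ a b, a ≠ b → Relation.ReflTransGen (fun i j => B i j < 0) a b)
    {x : n → R} (hx : 0 ≤ x) (hBx : 0 ≤ B *ᵥ x) (hx0 : x ≠ 0) (w : n) : 0 < x w := by
  refine (hx w).lt_of_ne' fun hw => hx0 (funext fun u => ?_)
  obtain rfl | hwu := eq_or_ne w u
  · exact hw
  · exact apply_eq_zero_of_reflTransGen hoff hx hBx (hconn w u hwu) hw

end ZMatrix

end Matrix

theorem stmt_0_general {V : Type*} [Fintype V] [DecidableEq V]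
    (I : Matrix V V ℤ)
    (hneg : ((-I).map ((↑) : ℤ → ℚ)).PosDef)
    (hoff : ∀ v w : V, v ≠ w → 0 ≤ I v w) :
    ∀ v : V, ∃ x : V → ℚ,
      (I.map ((↑) : ℤ → ℚ)) *ᵥ x = -Pi.single v 1 ∧
      (∀ w, 0 ≤ x w) ∧
      (∀ y : V → ℚ, (I.map ((↑) : ℤ → ℚ)) *ᵥ y = -Pi.single v 1 → y = x) ∧
      ((∀ a b : V, a ≠ b →
          Relation.ReflTransGen (fun c d => c ≠ d ∧ 0 < I c d) a b) →
        ∀ w, 0 < x w) := by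
  intro v
  set B := (-I).map ((↑) : ℤ → ℚ)
  have hB_apply : ∀ i j, B i j = -I i j := fun i j => by simp [B]
  have hoffB : ∀ i j, i ≠ j → B i j ≤ 0 := fun i j hij => by
    simpa [hB_apply] using hoff i j hij
  have hsolve : ∀ y, I.map ((↑) : ℤ → ℚ) *ᵥ y = -Pi.single v 1 ↔ B *ᵥ y = Pi.single v 1 := by
    intro y
    rw [show B = -I.map ((↑) : ℤ → ℚ) from Matrix.map_neg _ Int.cast_neg _]
    rw [neg_mulVec, neg_eq_iff_eq_neg]
  obtain ⟨x, hx⟩ := mulVec_surjective_iff_isUnit.2 hneg.isUnit (Pi.single v 1)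
  have hBx : 0 ≤ B *ᵥ x := hx ▸ Pi.single_nonneg.2 zero_le_one
  have hx0 : 0 ≤ x := hneg.nonneg_of_mulVec_nonneg hoffB hBx
  refine ⟨x, (hsolve x).2 hx, hx0, fun y hy => ?_, fun hconn => ?_⟩
  · exact mulVec_injective_iff_isUnit.2 hneg.isUnit (((hsolve y).1 hy).trans hx.symm)
  · have hconnB : ∀ a b, a ≠ b → Relation.ReflTransGen (fun i j => B i j < 0) a b :=
      fun a b hab => Relation.ReflTransGen.mono
        (fun i j (hij : i ≠ j ∧ 0 < I i j) => by simpa [hB_apply] using hij.2) _ _ (hconn a b hab)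
    refine pos_of_reflTransGen hoffB hconnB hx0 hBx fun h => ?_
    simpa [h] using congrFun hx v

/-- For a negative definite symmetric integer matrix `I` with nonnegative
off-diagonal entries, for each `v` there is a unique rational vector `x` with
`I x = -e_v`; it is nonnegative, and strictly positive if the associated graph
(edges = positive off-diagonal entries) is connected. -/
theorem stmt_0 {V : Type*} [Fintype V] [DecidableEq V]
    (I : Matrix V V ℤ) (hsymm : I.IsSymm)
    (hneg : ((-I).map ((↑) : ℤ → ℚ)).PosDef)
    (hoff : ∀ v w : V, v ≠ w → 0 ≤ I v w) :
    ∀ v : V, ∃ x : V → ℚ,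
      (I.map ((↑) : ℤ → ℚ)) *ᵥ x = -Pi.single v 1 ∧
      (∀ w, 0 ≤ x w) ∧
      (∀ y : V → ℚ, (I.map ((↑) : ℤ → ℚ)) *ᵥ y = -Pi.single v 1 → y = x) ∧
      ((∀ a b : V, a ≠ b →
          Relation.ReflTransGen (fun c d => c ≠ d ∧ 0 < I c d) a b) →
        ∀ w, 0 < x w) :=
  stmt_0_general I hneg hoff
end

section
/- Let D_1 = (a_1, b_1) and D_2 = (a_2, b_2) be two vectors in ℚ_{≥0}^2 with a_1 ≤ a_2 and b_1 ≥ b_2 (so neither dominates the other unless equality). Define the blow-up operation replacing the pair by triples (a_i, a_i + b_i, b_i). Then after finitely many such blow-ups of edges where the simultaneous-minimum condition fails, the resulting family satisfies that on each edge one of the vectors attains the minimum at both endpoints. -/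
/-- A combinatorial state: a graph on a finite set of natural-number vertices with a
family of rational "cycles" (coefficient vectors) indexed by `ι`. -/
structure CycleState (ι : Type) where
  verts : Finset ℕ
  edges : Finset (ℕ × ℕ)
  vec : ι → ℕ → ℚ

/-- Blowing up the edge `(v, w)`: a new vertex `u` is inserted whose coefficient in
each cycle is the sum of the coefficients at `v` and `w`. -/
def CycleState.blowup {ι : Type} (s : CycleState ι) (v w u : ℕ) : CycleState ι where
  verts := insert u s.verts
  edges := (s.edges.erase (v, w)) ∪ {(v, u), (u, w)}
  vec := fun i x => if x = u then s.vec i v + s.vec i w else s.vec i x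

/-- One blow-up step at some edge, using a fresh vertex. -/
def CycleState.Step {ι : Type} (s s' : CycleState ι) : Prop :=
  ∃ v w u : ℕ, (v, w) ∈ s.edges ∧ u ∉ s.verts ∧ v ∈ s.verts ∧ w ∈ s.verts ∧
    s' = s.blowup v w u

/-- On each edge one of the vectors attains the minimum at both endpoints. -/
def CycleState.Good {ι : Type} (s : CycleState ι) : Prop :=
  ∀ p ∈ s.edges, ∃ i : ι,
    (∀ j : ι, s.vec i p.1 ≤ s.vec j p.1) ∧ (∀ j : ι, s.vec i p.2 ≤ s.vec j p.2)

/-!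
On a bad edge `(v, w)` the first vector is smaller at `v`, by a gap `d`, and the second is smaller
at `w`, by a gap `e`. The gap at the inserted vertex `u` is `d - e`, so one of the new edges is good
and the other carries the gaps `(d - e, e)` or `(d, e - d)`: this is the subtractive Euclidean
algorithm, which terminates because `d` and `e` are nonnegative multiples of a common unit.
-/

namespace CycleState

variable {ι : Type}

/-- `Step` only asks the new vertex to avoid `verts`; this invariant makes it avoid the endpoints
of the old edges as well, so that a blow-up keeps the values on them. -/
def EdgesInVerts (s : CycleState ι) : Prop :=
  ∀ p ∈ s.edges, p.1 ∈ s.verts ∧ p.2 ∈ s.verts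

def GoodEdge (s : CycleState ι) (p : ℕ × ℕ) : Prop :=
  ∃ i : ι, (∀ j : ι, s.vec i p.1 ≤ s.vec j p.1) ∧ (∀ j : ι, s.vec i p.2 ≤ s.vec j p.2)

def GoodExcept (s : CycleState ι) (e : ℕ × ℕ) : Prop :=
  ∀ p ∈ s.edges, p ≠ e → s.GoodEdge p

lemma GoodExcept.good {s : CycleState ι} {e : ℕ × ℕ} (h : s.GoodExcept e) (he : s.GoodEdge e) :
    s.Good := fun p hp => if hpe : p = e then hpe ▸ he else h p hp hpe

section Blowup

variable {s : CycleState ι} {v w u : ℕ}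

lemma vec_blowup_self (i : ι) : (s.blowup v w u).vec i u = s.vec i v + s.vec i w := by
  simp [blowup]

lemma vec_blowup_of_ne (i : ι) {x : ℕ} (hx : x ≠ u) : (s.blowup v w u).vec i x = s.vec i x := by
  simp [blowup, hx]

lemma mem_edges_blowup {p : ℕ × ℕ} :
    p ∈ (s.blowup v w u).edges ↔ (p ∈ s.edges ∧ p ≠ (v, w)) ∨ p = (v, u) ∨ p = (u, w) := by
  simp only [blowup, Finset.mem_union, Finset.mem_erase, Finset.mem_insert,
    Finset.mem_singleton]
  tauto

lemma step_blowup (hvw : (v, w) ∈ s.edges) (hs : s.EdgesInVerts) (hu : u ∉ s.verts) :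
    Step s (s.blowup v w u) :=
  ⟨v, w, u, hvw, hu, (hs _ hvw).1, (hs _ hvw).2, rfl⟩

lemma EdgesInVerts.blowup (hs : s.EdgesInVerts) (hvw : (v, w) ∈ s.edges) :
    (s.blowup v w u).EdgesInVerts := by
  intro p hp
  rcases mem_edges_blowup.1 hp with ⟨hp', -⟩ | rfl | rfl
  · simp [CycleState.blowup, hs _ hp']
  all_goals simp [CycleState.blowup, hs _ hvw]

lemma GoodEdge.blowup {p : ℕ × ℕ} (hs : s.EdgesInVerts) (hu : u ∉ s.verts) (hp : p ∈ s.edges)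
    (h : s.GoodEdge p) : (s.blowup v w u).GoodEdge p := by
  have hne : ∀ x ∈ s.verts, x ≠ u := fun x hx hxu => hu (hxu ▸ hx)
  simpa only [GoodEdge, vec_blowup_of_ne _ (hne _ (hs p hp).1),
    vec_blowup_of_ne _ (hne _ (hs p hp).2)] using h

lemma GoodExcept.blowup_of_ne {p : ℕ × ℕ} (h : s.GoodExcept (v, w)) (hs : s.EdgesInVerts)
    (hu : u ∉ s.verts) (hp : p ∈ (s.blowup v w u).edges) (hvu : p ≠ (v, u)) (huw : p ≠ (u, w)) :
    (s.blowup v w u).GoodEdge p := by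
  rcases mem_edges_blowup.1 hp with ⟨hp, hne⟩ | rfl | rfl
  · exact (h p hp hne).blowup hs hu hp
  · exact absurd rfl hvu
  · exact absurd rfl huw

lemma GoodExcept.blowup_fst (h : s.GoodExcept (v, w)) (hs : s.EdgesInVerts) (hu : u ∉ s.verts)
    (huw : (s.blowup v w u).GoodEdge (u, w)) : (s.blowup v w u).GoodExcept (v, u) :=
  fun p hp hvu => if hp' : p = (u, w) then hp' ▸ huw else h.blowup_of_ne hs hu hp hvu hp'

lemma GoodExcept.blowup_snd (h : s.GoodExcept (v, w)) (hs : s.EdgesInVerts) (hu : u ∉ s.verts)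
    (hvu : (s.blowup v w u).GoodEdge (v, u)) : (s.blowup v w u).GoodExcept (u, w) :=
  fun p hp huw => if hp' : p = (v, u) then hp' ▸ hvu else h.blowup_of_ne hs hu hp hp' huw

end Blowup

lemma goodEdge_fin_two_iff {s : CycleState (Fin 2)} {p : ℕ × ℕ} :
    s.GoodEdge p ↔ (s.vec 0 p.1 ≤ s.vec 1 p.1 ∧ s.vec 0 p.2 ≤ s.vec 1 p.2) ∨
      (s.vec 1 p.1 ≤ s.vec 0 p.1 ∧ s.vec 1 p.2 ≤ s.vec 0 p.2) := by
  simp [GoodEdge, Fin.exists_fin_two, Fin.forall_fin_two]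

theorem exists_good_of_goodExcept {q : ℚ} (hq : 0 < q) (m n : ℕ) (s : CycleState (Fin 2))
    (v w : ℕ) (hs : s.EdgesInVerts) (hvw : (v, w) ∈ s.edges) (hgood : s.GoodExcept (v, w))
    (hv : s.vec 1 v - s.vec 0 v = m * q) (hw : s.vec 0 w - s.vec 1 w = n * q) :
    ∃ s', Relation.ReflTransGen Step s s' ∧ s'.Good := by
  induction h : m + n using Nat.strong_induction_on generalizing m n s v w with
  | _ k ih =>
  have hmq : 0 ≤ (m : ℚ) * q := by positivity
  have hnq : 0 ≤ (n : ℚ) * q := by positivity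
  rcases Nat.eq_zero_or_pos m with rfl | hm
  · push_cast at hv
    exact ⟨s, .refl, hgood.good (goodEdge_fin_two_iff.2 (Or.inr ⟨by linarith, by linarith⟩))⟩
  rcases Nat.eq_zero_or_pos n with rfl | hn
  · push_cast at hw
    exact ⟨s, .refl, hgood.good (goodEdge_fin_two_iff.2 (Or.inl ⟨by linarith, by linarith⟩))⟩
  obtain ⟨u, hu⟩ := Infinite.exists_notMem_finset s.verts
  have hvu : v ≠ u := fun h => hu (h ▸ (hs _ hvw).1)
  have hwu : w ≠ u := fun h => hu (h ▸ (hs _ hvw).2)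
  have hstep := step_blowup hvw hs hu
  have hs₁ := hs.blowup (u := u) hvw
  set s₁ := s.blowup v w u
  rcases le_or_gt n m with hnm | hmn
  · have hnmq : (n : ℚ) * q ≤ m * q := by gcongr
    have hgood₁ : s₁.GoodExcept (u, w) := by
      refine hgood.blowup_snd hs hu (goodEdge_fin_two_iff.2 (Or.inl ⟨?_, ?_⟩)) <;>
        simp only [vec_blowup_self, vec_blowup_of_ne _ hvu] <;> linarith
    have hu₁ : s₁.vec 1 u - s₁.vec 0 u = ((m - n : ℕ) : ℚ) * q := by
      rw [vec_blowup_self, vec_blowup_self, Nat.cast_sub hnm]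
      linear_combination hv - hw
    have hw₁ : s₁.vec 0 w - s₁.vec 1 w = n * q := by
      rwa [vec_blowup_of_ne _ hwu, vec_blowup_of_ne _ hwu]
    obtain ⟨s', hs', hgood'⟩ := ih _ (by omega) (m - n) n s₁ u w hs₁
      (mem_edges_blowup.2 (Or.inr (Or.inr rfl))) hgood₁ hu₁ hw₁ rfl
    exact ⟨s', .head hstep hs', hgood'⟩
  · have hmnq : (m : ℚ) * q ≤ n * q := by gcongr
    have hgood₁ : s₁.GoodExcept (v, u) := by
      refine hgood.blowup_fst hs hu (goodEdge_fin_two_iff.2 (Or.inr ⟨?_, ?_⟩)) <;>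
        simp only [vec_blowup_self, vec_blowup_of_ne _ hwu] <;> linarith
    have hv₁ : s₁.vec 1 v - s₁.vec 0 v = m * q := by
      rwa [vec_blowup_of_ne _ hvu, vec_blowup_of_ne _ hvu]
    have hu₁ : s₁.vec 0 u - s₁.vec 1 u = ((n - m : ℕ) : ℚ) * q := by
      rw [vec_blowup_self, vec_blowup_self, Nat.cast_sub hmn.le]
      linear_combination hw - hv
    obtain ⟨s', hs', hgood'⟩ := ih _ (by omega) m (n - m) s₁ v u hs₁
      (mem_edges_blowup.2 (Or.inr (Or.inl rfl))) hgood₁ hv₁ hu₁ rfl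
    exact ⟨s', .head hstep hs', hgood'⟩

end CycleState

lemma Rat.exists_nat_mul_eq_of_nonneg {x y : ℚ} (hx : 0 ≤ x) (hy : 0 ≤ y) :
    ∃ q > 0, ∃ m n : ℕ, x = m * q ∧ y = n * q := by
  obtain ⟨a, ha⟩ := Int.eq_ofNat_of_zero_le (Rat.num_nonneg.2 hx)
  obtain ⟨b, hb⟩ := Int.eq_ofNat_of_zero_le (Rat.num_nonneg.2 hy)
  refine ⟨1 / (x.den * y.den), by positivity, a * y.den, b * x.den, ?_, ?_⟩
  · conv_lhs => rw [← Rat.num_div_den x, ha]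
    push_cast
    field_simp
  · conv_lhs => rw [← Rat.num_div_den y, hb]
    push_cast
    field_simp

theorem stmt_9_general (a₁ b₁ a₂ b₂ : ℚ)
    (ha : a₁ ≤ a₂) (hb : b₂ ≤ b₁) :
    ∀ s : CycleState (Fin 2),
      s.verts = {0, 1} → s.edges = {(0, 1)} →
      s.vec = ![fun x => if x = 0 then a₁ else if x = 1 then b₁ else 0,
                fun x => if x = 0 then a₂ else if x = 1 then b₂ else 0] →
      ∃ s' : CycleState (Fin 2),
        Relation.ReflTransGen CycleState.Step s s' ∧ s'.Good := by
  intro s hverts hedges hvec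
  obtain ⟨q, hq, m, n, hm, hn⟩ :=
    Rat.exists_nat_mul_eq_of_nonneg (sub_nonneg.2 ha) (sub_nonneg.2 hb)
  refine s.exists_good_of_goodExcept hq m n 0 1 ?_ (by simp [hedges]) ?_ ?_ ?_
  · intro p hp
    simp only [hedges, Finset.mem_singleton] at hp
    simp [hp, hverts]
  · intro p hp hne
    exact absurd (Finset.mem_singleton.1 (hedges ▸ hp)) hne
  · simp [hvec, hm]
  · simp [hvec, hn]

/-- Starting from two vectors `D₁ = (a₁, b₁)`, `D₂ = (a₂, b₂)` in
`ℚ₊²` with `a₁ ≤ a₂` and `b₂ ≤ b₁`, placed on the single edge `(0, 1)`, finitely many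
blow-ups (each inserting the sum of the two endpoint coefficients) lead to a family
for which on each edge one vector attains the minimum at both endpoints. -/
theorem stmt_9 (a₁ b₁ a₂ b₂ : ℚ)
    (ha₁ : 0 ≤ a₁) (hb₁ : 0 ≤ b₁) (ha₂ : 0 ≤ a₂) (hb₂ : 0 ≤ b₂)
    (ha : a₁ ≤ a₂) (hb : b₂ ≤ b₁) :
    ∀ s : CycleState (Fin 2),
      s.verts = {0, 1} → s.edges = {(0, 1)} →
      s.vec = ![fun x => if x = 0 then a₁ else if x = 1 then b₁ else 0,
                fun x => if x = 0 then a₂ else if x = 1 then b₂ else 0] →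
      ∃ s' : CycleState (Fin 2),
        Relation.ReflTransGen CycleState.Step s s' ∧ s'.Good :=
  stmt_9_general a₁ b₁ a₂ b₂ ha hb
end
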